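/- arXiv:1103.3281 — 2 statements merged into one kernel-verified Lean document; each statement's English description precedes it below -/
import Mathlib

section
/- Let G = (V,E) be a finite cavity-monotone network. Then for every t > 1, the energy satisfies U(G;t) ≥ M(G) − (1/log t)·(|E| log 2 + Σ_{i∈V} log A(μ_i)), where for a local measure μ, A(μ) = max μ / min μ with max μ = max{μ(F) : μ(F) > 0} and min μ = min{μ(F) : μ(F) > 0}, and M(G) = max{|F| : F ⊆ E, μ(F) > 0}. -/
open Finset Filter
open scoped Classical ENNReal

section LocalDefs

variable {V : Type*} [DecidableEq V]

/-- Generating polynomial `Z(w) = Σ_{S ⊆ A} ν(S) ∏_{k∈S} w_k` of a measure `ν`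
on the subsets of the ground set `A`. -/
noncomputable def lZ (A : Finset V) (ν : Finset V → ℝ) (w : V → ℝ) : ℝ :=
  ∑ S ∈ A.powerset, ν S * ∏ k ∈ S, w k

/-- Gibbs--Boltzmann probability of the event `p` under external field `w`. -/
noncomputable def lProb (A : Finset V) (ν : Finset V → ℝ) (w : V → ℝ)
    (p : Finset V → Prop) : ℝ :=
  (∑ S ∈ A.powerset.filter p, ν S * ∏ k ∈ S, w k) / lZ A ν w

/-- The energy `U_ν(w)`, i.e. the expected cardinality of the random subset. -/
noncomputable def lEnergy (A : Finset V) (ν : Finset V → ℝ) (w : V → ℝ) : ℝ :=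
  (∑ S ∈ A.powerset, (S.card : ℝ) * ν S * ∏ k ∈ S, w k) / lZ A ν w

/-- `E^w_ν[|𝓕|·1_{e∈𝓕}]`. -/
noncomputable def lEnergyIn (A : Finset V) (ν : Finset V → ℝ) (e : V) (w : V → ℝ) : ℝ :=
  (∑ S ∈ A.powerset.filter (fun S => e ∈ S), (S.card : ℝ) * ν S * ∏ k ∈ S, w k) / lZ A ν w

/-- The cavity ratio `Γ^e_ν(w') = Z^{/e}(w') / Z^{∖e}(w')`; it only depends on the
coordinates of `w` different from `e`. -/
noncomputable def lGamma (A : Finset V) (ν : Finset V → ℝ) (e : V) (w : V → ℝ) : ℝ :=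
  (∑ S ∈ (A.erase e).powerset, ν (insert e S) * ∏ k ∈ S, w k) /
  (∑ S ∈ (A.erase e).powerset, ν S * ∏ k ∈ S, w k)

/-- Rayleigh property: pairwise negative correlation under every positive external field. -/
def lRayleigh (A : Finset V) (ν : Finset V → ℝ) : Prop :=
  ∀ w : V → ℝ, (∀ k ∈ A, 0 < w k) → ∀ e ∈ A, ∀ f ∈ A, e ≠ f →
    lProb A ν w (fun S => e ∈ S ∧ f ∈ S) ≤
      lProb A ν w (fun S => e ∈ S) * lProb A ν w (fun S => f ∈ S)

/-- Size-increasing property: every ground element positively influences the total size. -/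
def lSizeInc (A : Finset V) (ν : Finset V → ℝ) : Prop :=
  ∀ w : V → ℝ, (∀ k ∈ A, 0 < w k) → ∀ e ∈ A,
    lEnergy A ν w * lProb A ν w (fun S => e ∈ S) < lEnergyIn A ν e w

/-- Cavity-monotone: nonnegative, `ν(∅) > 0`, Rayleigh and size-increasing. -/
def lCavityMonotone (A : Finset V) (ν : Finset V → ℝ) : Prop :=
  (∀ S ∈ A.powerset, 0 ≤ ν S) ∧ 0 < ν ∅ ∧ lRayleigh A ν ∧ lSizeInc A ν

end LocalDefs

section NetworkDefs

variable {V : Type*} [DecidableEq V]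

/-- The cavity operator: `(Γ_G x)_{i→j}` is the cavity ratio of the local measure `μ i`
at the edge `ij`, with external field `(x_{k→i} : k ∈ ∂i ∖ {j})`.  Local measures are
encoded as functions of the set of neighbours selected. -/
noncomputable def cavOp (G : SimpleGraph V) [G.LocallyFinite]
    (μ : V → Finset V → ℝ) (x : V → V → ℝ) (i j : V) : ℝ :=
  (∑ S ∈ ((G.neighborFinset i).erase j).powerset, μ i (insert j S) * ∏ k ∈ S, x k i) /
  (∑ S ∈ ((G.neighborFinset i).erase j).powerset, μ i S * ∏ k ∈ S, x k i)

/-- One step of the cavity iteration at activity `t` : `x ↦ t Γ_G(x)`. -/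
noncomputable def cavStep (G : SimpleGraph V) [G.LocallyFinite]
    (μ : V → Finset V → ℝ) (t : ℝ) (x : V → V → ℝ) : V → V → ℝ :=
  fun i j => t * cavOp G μ x i j

/-- The neighbours `k` of `i` such that the edge `ik` belongs to the spanning subgraph `F`;
this encodes `F ∩ E_i` as a set of neighbours. -/
noncomputable def nbrsIn (G : SimpleGraph V) [G.LocallyFinite]
    (F : Finset (Sym2 V)) (i : V) : Finset V :=
  (G.neighborFinset i).filter (fun k => s(i, k) ∈ F)

variable [Fintype V]

/-- Global measure `μ(F) = ∏_i μ_i(F ∩ E_i)` of a spanning subgraph `F`. -/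
noncomputable def gWeight (G : SimpleGraph V) [DecidableRel G.Adj]
    (μ : V → Finset V → ℝ) (F : Finset (Sym2 V)) : ℝ :=
  ∏ i : V, μ i (nbrsIn G F i)

/-- Partition function `Z(G;t) = Σ_{F ⊆ E} μ(F) t^{|F|}`. -/
noncomputable def ZG (G : SimpleGraph V) [DecidableRel G.Adj]
    (μ : V → Finset V → ℝ) (t : ℝ) : ℝ :=
  ∑ F ∈ G.edgeFinset.powerset, gWeight G μ F * t ^ F.card

/-- Gibbs--Boltzmann probability of the event `p` at activity `t`. -/
noncomputable def gProb (G : SimpleGraph V) [DecidableRel G.Adj]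
    (μ : V → Finset V → ℝ) (t : ℝ) (p : Finset (Sym2 V) → Prop) : ℝ :=
  (∑ F ∈ G.edgeFinset.powerset.filter p, gWeight G μ F * t ^ F.card) / ZG G μ t

/-- Energy `U(G;t)`, the expected size of the random spanning subgraph. -/
noncomputable def UG (G : SimpleGraph V) [DecidableRel G.Adj]
    (μ : V → Finset V → ℝ) (t : ℝ) : ℝ :=
  (∑ F ∈ G.edgeFinset.powerset, (F.card : ℝ) * gWeight G μ F * t ^ F.card) / ZG G μ t

/-- `M(G)`, the maximum size of a spanning subgraph with positive weight. -/
noncomputable def MG (G : SimpleGraph V) [DecidableRel G.Adj]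
    (μ : V → Finset V → ℝ) : ℕ :=
  (G.edgeFinset.powerset.filter (fun F => 0 < gWeight G μ F)).sup Finset.card

end NetworkDefs

/-- `A(ν) = max ν / min ν`, the ratio of the largest to the smallest positive value of
the local measure `ν` on subsets of the ground set `A`. -/
noncomputable def AM {V : Type*} [DecidableEq V] (A : Finset V) (ν : Finset V → ℝ) : ℝ :=
  sSup (ν '' {S : Finset V | S ⊆ A ∧ 0 < ν S}) /
    sInf (ν '' {S : Finset V | S ⊆ A ∧ 0 < ν S})

/-! By Jensen's inequality for `exp`, `t^{-U} ≤ E[t^{-|𝓕|}] = Z(G;1)/Z(G;t)`, while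
`Z(G;t) ≥ μ(F) t^{M(G)}` for a maximal `F` of positive weight. Hence
`(M(G) − U) log t ≤ log (Z(G;1)/μ(F))`, and `Z(G;1) ≤ 2^{|E|} ∏_i max μ_i`,
`μ(F) ≥ ∏_i min μ_i`. -/

section WeightedSums

variable {ι : Type*} (s : Finset ι) (w : ι → ℝ) (n : ι → ℕ) {t : ℝ}

theorem neg_mean_mul_log_le_log_sum_div (ht : 0 < t) (hw : ∀ i ∈ s, 0 ≤ w i)
    (hZ : 0 < ∑ i ∈ s, w i * t ^ n i) :
    -((∑ i ∈ s, n i * w i * t ^ n i) / ∑ i ∈ s, w i * t ^ n i) * Real.log t ≤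
      Real.log ((∑ i ∈ s, w i) / ∑ i ∈ s, w i * t ^ n i) := by
  set Z := ∑ i ∈ s, w i * t ^ n i
  have hjensen := convexOn_exp.map_sum_le (t := s) (w := fun i => w i * t ^ n i / Z)
    (p := fun i => -(n i * Real.log t))
    (fun i hi => div_nonneg (mul_nonneg (hw i hi) (pow_nonneg ht.le _)) hZ.le)
    (by rw [← Finset.sum_div, div_self hZ.ne']) (fun _ _ => Set.mem_univ _)
  have hmean : ∑ i ∈ s, (w i * t ^ n i / Z) • -(n i * Real.log t) =
      -((∑ i ∈ s, n i * w i * t ^ n i) / Z) * Real.log t := by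
    rw [neg_mul, Finset.sum_div, Finset.sum_mul, ← Finset.sum_neg_distrib]
    refine Finset.sum_congr rfl fun i _ => ?_
    rw [smul_eq_mul]
    ring
  have hcancel : ∑ i ∈ s, (w i * t ^ n i / Z) • Real.exp (-(n i * Real.log t)) =
      (∑ i ∈ s, w i) / Z := by
    rw [Finset.sum_div]
    refine Finset.sum_congr rfl fun i _ => ?_
    rw [smul_eq_mul, Real.exp_neg, Real.exp_nat_mul, Real.exp_log ht]
    field_simp
  rw [hmean, hcancel] at hjensen
  rw [Real.le_log_iff_exp_le ((Real.exp_pos _).trans_le hjensen)]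
  exact hjensen

theorem card_sub_log_div_le_mean (ht : 1 < t) (hw : ∀ i ∈ s, 0 ≤ w i) {j : ι} (hj : j ∈ s)
    (hwj : 0 < w j) :
    (n j : ℝ) - 1 / Real.log t * Real.log ((∑ i ∈ s, w i) / w j) ≤
      (∑ i ∈ s, n i * w i * t ^ n i) / ∑ i ∈ s, w i * t ^ n i := by
  have ht0 : 0 < t := one_pos.trans ht
  have hterm : w j * t ^ n j ≤ ∑ i ∈ s, w i * t ^ n i :=
    Finset.single_le_sum (f := fun i => w i * t ^ n i)
      (fun i hi => mul_nonneg (hw i hi) (pow_nonneg ht0.le _)) hj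
  have hZ : 0 < ∑ i ∈ s, w i * t ^ n i := (mul_pos hwj (pow_pos ht0 _)).trans_le hterm
  have hZ1 : 0 < ∑ i ∈ s, w i := hwj.trans_le (Finset.single_le_sum hw hj)
  have hjensen := neg_mean_mul_log_le_log_sum_div s w n ht0 hw hZ
  rw [Real.log_div hZ1.ne' hZ.ne'] at hjensen
  have hlogZ : Real.log (w j) + n j * Real.log t ≤ Real.log (∑ i ∈ s, w i * t ^ n i) := by
    rw [← Real.log_pow, ← Real.log_mul hwj.ne' (pow_pos ht0 _).ne']
    exact Real.log_le_log (mul_pos hwj (pow_pos ht0 _)) hterm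
  have hgap : (n j : ℝ) - (∑ i ∈ s, n i * w i * t ^ n i) / ∑ i ∈ s, w i * t ^ n i ≤
      1 / Real.log t * Real.log ((∑ i ∈ s, w i) / w j) := by
    rw [Real.log_div hZ1.ne' hwj.ne', one_div_mul_eq_div, le_div_iff₀ (Real.log_pos ht)]
    linarith
  linarith

end WeightedSums

section LocalMeasure

variable {V : Type*} {A : Finset V} {ν : Finset V → ℝ}

variable (A ν) in
/-- The positive values of `ν`; `max ν` and `min ν` in `A(ν)` are its `sSup` and `sInf`. -/
def posValues : Set ℝ := ν '' {S : Finset V | S ⊆ A ∧ 0 < ν S}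

variable (A ν) in
theorem posValues_finite : (posValues A ν).Finite := by
  refine Set.Finite.image _ (A.powerset.finite_toSet.subset fun S hS => ?_)
  simpa using hS.1

theorem pos_of_mem_posValues {x : ℝ} (hx : x ∈ posValues A ν) : 0 < x := by
  obtain ⟨S, hS, rfl⟩ := hx
  exact hS.2

theorem le_sSup_posValues {S : Finset V} (hS : S ⊆ A) (hνS : 0 < ν S) :
    ν S ≤ sSup (posValues A ν) :=
  le_csSup (posValues_finite A ν).bddAbove ⟨S, ⟨hS, hνS⟩, rfl⟩

theorem sInf_posValues_le {S : Finset V} (hS : S ⊆ A) (hνS : 0 < ν S) :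
    sInf (posValues A ν) ≤ ν S :=
  csInf_le (posValues_finite A ν).bddBelow ⟨S, ⟨hS, hνS⟩, rfl⟩

theorem sSup_posValues_nonneg : 0 ≤ sSup (posValues A ν) :=
  Real.sSup_nonneg fun _ hx => (pos_of_mem_posValues hx).le

theorem sInf_posValues_pos (h0 : 0 < ν ∅) : 0 < sInf (posValues A ν) :=
  have hne : (posValues A ν).Nonempty := ⟨ν ∅, ∅, ⟨Finset.empty_subset _, h0⟩, rfl⟩
  pos_of_mem_posValues (hne.csInf_mem (posValues_finite A ν))

theorem AM_eq [DecidableEq V] : AM A ν = sSup (posValues A ν) / sInf (posValues A ν) := rfl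

theorem AM_pos [DecidableEq V] (h0 : 0 < ν ∅) : 0 < AM A ν :=
  div_pos (h0.trans_le (le_sSup_posValues (Finset.empty_subset _) h0)) (sInf_posValues_pos h0)

end LocalMeasure

section GlobalWeight

variable {V : Type*} [Fintype V] [DecidableEq V] {G : SimpleGraph V} [DecidableRel G.Adj]
  {μ : V → Finset V → ℝ}

theorem nbrsIn_subset (F : Finset (Sym2 V)) (i : V) : nbrsIn G F i ⊆ G.neighborFinset i :=
  Finset.filter_subset _ _

theorem gWeight_nonneg (hμ : ∀ i, ∀ S ∈ (G.neighborFinset i).powerset, 0 ≤ μ i S)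
    (F : Finset (Sym2 V)) : 0 ≤ gWeight G μ F :=
  Finset.prod_nonneg fun i _ => hμ i _ (Finset.mem_powerset.mpr (nbrsIn_subset F i))

theorem gWeight_empty_pos (h0 : ∀ i, 0 < μ i ∅) : 0 < gWeight G μ ∅ :=
  Finset.prod_pos fun i _ => by simpa [nbrsIn] using h0 i

theorem pos_of_gWeight_pos (hμ : ∀ i, ∀ S ∈ (G.neighborFinset i).powerset, 0 ≤ μ i S)
    {F : Finset (Sym2 V)} (hF : 0 < gWeight G μ F) (i : V) : 0 < μ i (nbrsIn G F i) :=
  (hμ i _ (Finset.mem_powerset.mpr (nbrsIn_subset F i))).lt_of_ne'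
    (Finset.prod_ne_zero_iff.mp hF.ne' i (Finset.mem_univ i))

theorem gWeight_le_prod_sSup (hμ : ∀ i, ∀ S ∈ (G.neighborFinset i).powerset, 0 ≤ μ i S)
    (F : Finset (Sym2 V)) :
    gWeight G μ F ≤ ∏ i, sSup (posValues (G.neighborFinset i) (μ i)) := by
  rcases (gWeight_nonneg hμ F).eq_or_lt with hF | hF
  · exact hF ▸ Finset.prod_nonneg fun _ _ => sSup_posValues_nonneg
  · exact Finset.prod_le_prod (fun i _ => (pos_of_gWeight_pos hμ hF i).le)
      fun i _ => le_sSup_posValues (nbrsIn_subset F i) (pos_of_gWeight_pos hμ hF i)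

theorem prod_sInf_le_gWeight (hμ : ∀ i, ∀ S ∈ (G.neighborFinset i).powerset, 0 ≤ μ i S)
    (h0 : ∀ i, 0 < μ i ∅) {F : Finset (Sym2 V)} (hF : 0 < gWeight G μ F) :
    ∏ i, sInf (posValues (G.neighborFinset i) (μ i)) ≤ gWeight G μ F :=
  Finset.prod_le_prod (fun i _ => (sInf_posValues_pos (h0 i)).le)
    fun i _ => sInf_posValues_le (nbrsIn_subset F i) (pos_of_gWeight_pos hμ hF i)

theorem sum_gWeight_le (hμ : ∀ i, ∀ S ∈ (G.neighborFinset i).powerset, 0 ≤ μ i S) :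
    ∑ F ∈ G.edgeFinset.powerset, gWeight G μ F ≤
      2 ^ G.edgeFinset.card * ∏ i, sSup (posValues (G.neighborFinset i) (μ i)) := by
  calc ∑ F ∈ G.edgeFinset.powerset, gWeight G μ F
      ≤ ∑ _F ∈ G.edgeFinset.powerset, ∏ i, sSup (posValues (G.neighborFinset i) (μ i)) :=
        Finset.sum_le_sum fun F _ => gWeight_le_prod_sSup hμ F
    _ = 2 ^ G.edgeFinset.card * ∏ i, sSup (posValues (G.neighborFinset i) (μ i)) := by
        rw [Finset.sum_const, Finset.card_powerset, nsmul_eq_mul]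
        push_cast
        rfl

theorem log_sum_gWeight_div_le (hμ : ∀ i, ∀ S ∈ (G.neighborFinset i).powerset, 0 ≤ μ i S)
    (h0 : ∀ i, 0 < μ i ∅) {F : Finset (Sym2 V)} (hF : 0 < gWeight G μ F) :
    Real.log ((∑ H ∈ G.edgeFinset.powerset, gWeight G μ H) / gWeight G μ F) ≤
      G.edgeFinset.card * Real.log 2 + ∑ i, Real.log (AM (G.neighborFinset i) (μ i)) := by
  have hsInf : 0 < ∏ i, sInf (posValues (G.neighborFinset i) (μ i)) :=
    Finset.prod_pos fun i _ => sInf_posValues_pos (h0 i)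
  have hratio : (∑ H ∈ G.edgeFinset.powerset, gWeight G μ H) / gWeight G μ F ≤
      2 ^ G.edgeFinset.card * ∏ i, AM (G.neighborFinset i) (μ i) := by
    simp only [AM_eq, Finset.prod_div_distrib, ← mul_div_assoc]
    exact div_le_div₀
      (mul_nonneg (by positivity) (Finset.prod_nonneg fun _ _ => sSup_posValues_nonneg))
      (sum_gWeight_le hμ) hsInf (prod_sInf_le_gWeight hμ h0 hF)
  have hsum_pos : 0 < ∑ H ∈ G.edgeFinset.powerset, gWeight G μ H :=
    Finset.sum_pos' (fun H _ => gWeight_nonneg hμ H)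
      ⟨∅, Finset.empty_mem_powerset _, gWeight_empty_pos h0⟩
  calc Real.log ((∑ H ∈ G.edgeFinset.powerset, gWeight G μ H) / gWeight G μ F)
      ≤ Real.log (2 ^ G.edgeFinset.card * ∏ i, AM (G.neighborFinset i) (μ i)) :=
        Real.log_le_log (div_pos hsum_pos hF) hratio
    _ = G.edgeFinset.card * Real.log 2 + ∑ i, Real.log (AM (G.neighborFinset i) (μ i)) := by
        rw [Real.log_mul (by positivity) (Finset.prod_pos fun i _ => AM_pos (h0 i)).ne',
          Real.log_pow, Real.log_prod fun i _ => (AM_pos (h0 i)).ne']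

theorem exists_gWeight_pos_card_eq_MG (h0 : ∀ i, 0 < μ i ∅) :
    ∃ F ∈ G.edgeFinset.powerset, 0 < gWeight G μ F ∧ F.card = MG G μ := by
  obtain ⟨F, hF, hcard⟩ := Finset.exists_mem_eq_sup
    (G.edgeFinset.powerset.filter fun F => 0 < gWeight G μ F)
    ⟨∅, Finset.mem_filter.mpr ⟨Finset.empty_mem_powerset _, gWeight_empty_pos h0⟩⟩ Finset.card
  exact ⟨F, (Finset.mem_filter.mp hF).1, (Finset.mem_filter.mp hF).2, hcard.symm⟩

end GlobalWeight

/-- on a finite cavity-monotone network, for every `t > 1`,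
`U(G;t) ≥ M(G) − (1/log t)(|E| log 2 + Σ_i log A(μ_i))`. -/
theorem stmt15 {V : Type*} [Fintype V] [DecidableEq V] (G : SimpleGraph V)
    [DecidableRel G.Adj] (μ : V → Finset V → ℝ)
    (hcm : ∀ i : V, lCavityMonotone (G.neighborFinset i) (μ i))
    (t : ℝ) (ht : 1 < t) :
    (MG G μ : ℝ) -
        (1 / Real.log t) * ((G.edgeFinset.card : ℝ) * Real.log 2 +
          ∑ i : V, Real.log (AM (G.neighborFinset i) (μ i))) ≤
      UG G μ t := by
  have hμ : ∀ i, ∀ S ∈ (G.neighborFinset i).powerset, 0 ≤ μ i S := fun i => (hcm i).1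
  have h0 : ∀ i, 0 < μ i ∅ := fun i => (hcm i).2.1
  obtain ⟨F, hFE, hFpos, hFcard⟩ := exists_gWeight_pos_card_eq_MG (G := G) h0
  calc (MG G μ : ℝ) - 1 / Real.log t * ((G.edgeFinset.card : ℝ) * Real.log 2 +
          ∑ i : V, Real.log (AM (G.neighborFinset i) (μ i)))
      ≤ F.card - 1 / Real.log t *
          Real.log ((∑ H ∈ G.edgeFinset.powerset, gWeight G μ H) / gWeight G μ F) := by
        rw [← hFcard]
        gcongr
        · exact one_div_nonneg.mpr (Real.log_nonneg ht.le)
        · exact log_sum_gWeight_div_le hμ h0 hFpos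
    _ ≤ UG G μ t :=
        card_sub_log_div_le_mean _ _ Finset.card ht (fun F _ => gWeight_nonneg hμ F) hFE hFpos
end

section
/- The cavity equation at infinite activity: let G = (V,E) be a finite cavity-monotone network and for each t > 0 let x(t) be the unique globally attractive solution of the cavity equation x = tΓ_G(x). Then the coordinatewise limit x̄ := lim_{t→∞} x(t) exists in (0,∞]^{Ē} (the map t ↦ x(t) is coordinatewise nondecreasing), and x̄ is the smallest solution in (0,∞]^{Ē} of the equation x̄ = (Γ̄_G ∘ Γ_G)(x̄): it satisfies this equation, and every y ∈ (0,∞]^{Ē} with y = (Γ̄_G ∘ Γ_G)(y) satisfies x̄ ≤ y coordinatewise. -/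
open Finset Filter
open scoped Classical ENNReal

section InfiniteActivity

variable {V : Type*} [DecidableEq V]

/-- Extension of the cavity operator `Γ_G` to configurations with values in `(0,∞]`
(encoded in `ℝ≥0∞`), obtained as the monotone (decreasing) limit along truncations of
the infinite coordinates; it takes finite nonnegative values. -/
noncomputable def cavOpExt (G : SimpleGraph V) [G.LocallyFinite]
    (μ : V → Finset V → ℝ) (x : V → V → ℝ≥0∞) : V → V → ℝ :=
  fun i j => ⨅ M : ℕ, cavOp G μ (fun k l => (x k l ⊓ (M : ℝ≥0∞)).toReal) i j

/-- The limiting cavity operator at infinite activity,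
`Γ̄_G(x) = lim_{t→∞} t Γ_G(t x)`, an increasing limit realised as the supremum over
`t ≥ 1`; it takes values in `(0,∞]` (encoded in `ℝ≥0∞`). -/
noncomputable def cavOpBar (G : SimpleGraph V) [G.LocallyFinite]
    (μ : V → Finset V → ℝ) (x : V → V → ℝ) : V → V → ℝ≥0∞ :=
  fun i j => ⨆ (t : ℝ) (_ : 1 ≤ t),
    ENNReal.ofReal (t * cavOp G μ (fun k l => t * x k l) i j)

open Topology

section GeneratingPolynomial

variable {V : Type*} {A : Finset V} {ν : Finset V → ℝ} {w w' : V → ℝ}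

lemma lZ_congr (h : ∀ k ∈ A, w k = w' k) : lZ A ν w = lZ A ν w' :=
  sum_congr rfl fun S hS => by
    rw [prod_congr rfl fun k hk => h k (mem_powerset.1 hS hk)]

lemma lZ_nonneg (hν : ∀ S ⊆ A, 0 ≤ ν S) (hw : ∀ k ∈ A, 0 ≤ w k) : 0 ≤ lZ A ν w :=
  sum_nonneg fun S hS => mul_nonneg (hν S (mem_powerset.1 hS))
    (prod_nonneg fun k hk => hw k (mem_powerset.1 hS hk))

lemma lZ_pos (hν : ∀ S ⊆ A, 0 ≤ ν S) (h0 : 0 < ν ∅) (hw : ∀ k ∈ A, 0 ≤ w k) :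
    0 < lZ A ν w := by
  have := single_le_sum (f := fun S => ν S * ∏ k ∈ S, w k)
    (fun S hS => mul_nonneg (hν S (mem_powerset.1 hS))
      (prod_nonneg fun k hk => hw k (mem_powerset.1 hS hk))) (empty_mem_powerset A)
  simp only [prod_empty, mul_one] at this
  exact h0.trans_le this

lemma tendsto_lZ {ι : Type*} {l : Filter ι} {wn : ι → V → ℝ}
    (h : ∀ k ∈ A, Tendsto (fun n => wn n k) l (𝓝 (w k))) :
    Tendsto (fun n => lZ A ν (wn n)) l (𝓝 (lZ A ν w)) :=
  tendsto_finsetSum _ fun _ hS =>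
    (tendsto_finsetProd _ fun k hk => h k (mem_powerset.1 hS hk)).const_mul _

lemma hasDerivAt_lZ_smul (w : V → ℝ) {u : ℝ} (hu : u ≠ 0) :
    HasDerivAt (fun s => lZ A ν fun k => s * w k)
      (lZ A (fun S => S.card * ν S) (fun k => u * w k) / u) u := by
  have hpow : ∀ S : Finset V, ∀ s : ℝ, ∏ k ∈ S, s * w k = s ^ S.card * ∏ k ∈ S, w k :=
    fun S s => by rw [prod_mul_distrib, prod_const]
  simp only [lZ, hpow, sum_div]
  refine HasDerivAt.fun_sum fun S _ => ?_
  refine (((hasDerivAt_pow S.card u).mul_const _).const_mul (ν S)).congr_deriv ?_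
  rcases S.card with _ | n
  · simp
  · field_simp
    push_cast
    ring

variable [DecidableEq V]

lemma lZ_eq_add_mul {f : V} (hf : f ∈ A) (ν : Finset V → ℝ) (w : V → ℝ) :
    lZ A ν w = lZ (A.erase f) ν w + w f * lZ (A.erase f) (ν ∘ insert f) w := by
  rw [lZ, ← insert_erase hf, sum_powerset_insert (notMem_erase f A), erase_insert_eq_erase,
    erase_eq_of_notMem (notMem_erase f A), lZ, lZ, mul_sum]
  congr 1
  refine sum_congr rfl fun S hS => ?_
  rw [prod_insert fun h => notMem_erase f A (mem_powerset.1 hS h), Function.comp_apply]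
  ring

lemma lZ_ite_mem {f : V} (hf : f ∈ A) :
    lZ A (fun T => if f ∈ T then ν T else 0) w = w f * lZ (A.erase f) (ν ∘ insert f) w := by
  rw [lZ_eq_add_mul hf]
  have hout : lZ (A.erase f) (fun T => if f ∈ T then ν T else 0) w = 0 :=
    sum_eq_zero fun S hS => by
      simp only [if_neg fun h => notMem_erase f A (mem_powerset.1 hS h), zero_mul]
  rw [hout, zero_add]
  congr 1
  exact sum_congr rfl fun S _ => by simp only [Function.comp_apply, if_pos (mem_insert_self f S)]

end GeneratingPolynomial

section CavityRatio

variable {V : Type*} {A : Finset V} {ν : Finset V → ℝ} {e f : V} {w w' : V → ℝ}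

lemma lProb_eq (p : Finset V → Prop) :
    lProb A ν w p = lZ A (fun T => if p T then ν T else 0) w / lZ A ν w := by
  rw [lProb, lZ, sum_filter]
  congr 1
  exact sum_congr rfl fun T _ => by by_cases h : p T <;> simp [h]

lemma lEnergy_eq : lEnergy A ν w = lZ A (fun S => S.card * ν S) w / lZ A ν w := rfl

variable [DecidableEq V]

lemma lProb_mem_eq :
    lProb A ν w (fun S => e ∈ S) = lZ A (fun T => if e ∈ T then ν T else 0) w / lZ A ν w := by
  rw [lProb_eq]
  congr 2
  ext T
  by_cases h : e ∈ T <;> simp [h]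

lemma lProb_mem (he : e ∈ A) :
    lProb A ν w (fun S => e ∈ S) = w e * lZ (A.erase e) (ν ∘ insert e) w / lZ A ν w := by
  rw [lProb_mem_eq, lZ_ite_mem he]

lemma lProb_mem_and_mem (he : e ∈ A) (hf : f ∈ A.erase e) :
    lProb A ν w (fun S => e ∈ S ∧ f ∈ S) =
      w e * (w f * lZ ((A.erase e).erase f) ((ν ∘ insert e) ∘ insert f) w) / lZ A ν w := by
  have hfe : f ≠ e := ne_of_mem_erase hf
  have hcomp : (fun T => if f ∈ T then ν T else 0) ∘ insert e =
      fun S => if f ∈ S then (ν ∘ insert e) S else 0 := by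
    ext S
    simp [mem_insert, hfe]
  rw [lProb_eq]
  refine congrArg (· / _) ?_
  trans lZ A (fun T => if e ∈ T then (if f ∈ T then ν T else 0) else 0) w
  · congr 1; ext T; by_cases h : e ∈ T <;> simp [h]
  rw [lZ_ite_mem he, hcomp, lZ_ite_mem hf]

lemma lEnergyIn_eq :
    lEnergyIn A ν e w = lZ A (fun T => T.card * if e ∈ T then ν T else 0) w / lZ A ν w := by
  rw [lEnergyIn, lZ, sum_filter]
  congr 1
  exact sum_congr rfl fun T _ => by by_cases h : e ∈ T <;> simp [h, mul_assoc]

lemma lGamma_eq :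
    lGamma A ν e w = lZ (A.erase e) (ν ∘ insert e) w / lZ (A.erase e) ν w := rfl

lemma nonneg_of_subset_erase (hν : ∀ S ⊆ A, 0 ≤ ν S) : ∀ S ⊆ A.erase e, 0 ≤ ν S :=
  fun _ hS => hν _ (hS.trans (erase_subset e A))

lemma nonneg_comp_insert (hν : ∀ S ⊆ A, 0 ≤ ν S) (he : e ∈ A) :
    ∀ S ⊆ A.erase e, 0 ≤ (ν ∘ insert e) S :=
  fun _ hS => hν _ (insert_subset he (hS.trans (erase_subset e A)))

lemma lGamma_congr (h : ∀ k ∈ A.erase e, w k = w' k) : lGamma A ν e w = lGamma A ν e w' := by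
  rw [lGamma_eq, lGamma_eq, lZ_congr h, lZ_congr h]

lemma tendsto_lGamma (hν : ∀ S ⊆ A, 0 ≤ ν S) (h0 : 0 < ν ∅) {ι : Type*} {l : Filter ι}
    {wn : ι → V → ℝ} (hw : ∀ k ∈ A.erase e, 0 ≤ w k)
    (h : ∀ k ∈ A.erase e, Tendsto (fun n => wn n k) l (𝓝 (w k))) :
    Tendsto (fun n => lGamma A ν e (wn n)) l (𝓝 (lGamma A ν e w)) :=
  (tendsto_lZ h).div (tendsto_lZ h) (lZ_pos (nonneg_of_subset_erase hν) h0 hw).ne'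

end CavityRatio

section Rayleigh

variable {V : Type*} [DecidableEq V] {A : Finset V} {ν : Finset V → ℝ} {e f : V} {w w' : V → ℝ}

lemma lRayleigh.lZ_insert_mul_le (hR : lRayleigh A ν) (hν : ∀ S ⊆ A, 0 ≤ ν S)
    (h0 : 0 < ν ∅) (he : e ∈ A) (hf : f ∈ A.erase e)
    (hw : ∀ k ∈ (A.erase e).erase f, 0 < w k) :
    lZ ((A.erase e).erase f) ((ν ∘ insert e) ∘ insert f) w * lZ ((A.erase e).erase f) ν w ≤
      lZ ((A.erase e).erase f) (ν ∘ insert e) w * lZ ((A.erase e).erase f) (ν ∘ insert f) w := by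
  have hfe : f ≠ e := ne_of_mem_erase hf
  have hfA : f ∈ A := mem_of_mem_erase hf
  -- Rayleigh at `u` (`w` with `1` at `e` and `f`). Writing `N₀, N₁, D₀, D₁` for the sums of
  -- `ν ∘ insert e`, `(ν ∘ insert e) ∘ insert f`, `ν`, `ν ∘ insert f` over `(A.erase e).erase f`,
  -- `Z = D₀ + D₁ + N₀ + N₁` and it reads `N₁ Z ≤ (N₀ + N₁) (D₁ + N₁)`, i.e. `N₁ D₀ ≤ N₀ D₁`.
  set u : V → ℝ := fun k => if k = e ∨ k = f then 1 else w k
  have hue : u e = 1 := by simp [u]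
  have huf : u f = 1 := by simp [u]
  have huw : ∀ g, lZ ((A.erase e).erase f) g u = lZ ((A.erase e).erase f) g w :=
    fun g => lZ_congr fun k hk => by
      simp [u, ne_of_mem_erase hk, ne_of_mem_erase (mem_of_mem_erase hk)]
  have hupos : ∀ k ∈ A, 0 < u k := fun k hk => by
    by_cases hk' : k = e ∨ k = f
    · simp [u, hk']
    · push Not at hk'
      simpa [u, hk'] using hw k (mem_erase.2 ⟨hk'.2, mem_erase.2 ⟨hk'.1, hk⟩⟩)
  have hcomm : (ν ∘ insert f) ∘ insert e = (ν ∘ insert e) ∘ insert f := by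
    ext S; simp [insert_comm]
  have hZ := lZ_eq_add_mul he ν u
  rw [lZ_eq_add_mul hf, lZ_eq_add_mul hf (ν ∘ insert e)] at hZ
  have hPe := lProb_mem (ν := ν) (w := u) he
  rw [lZ_eq_add_mul hf (ν ∘ insert e)] at hPe
  have hPf := lProb_mem (ν := ν) (w := u) hfA
  rw [lZ_eq_add_mul (mem_erase.2 ⟨hfe.symm, he⟩) (ν ∘ insert f), erase_right_comm, hcomm] at hPf
  have hPef := lProb_mem_and_mem (ν := ν) (w := u) he hf
  have hray := hR u hupos e he f hfA hfe.symm
  rw [hPe, hPf, hPef] at hray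
  simp only [hue, huf, one_mul, huw] at hZ hray
  have hZpos : 0 < lZ A ν u := lZ_pos hν h0 fun k hk => (hupos k hk).le
  rw [hZ] at hray hZpos
  rw [div_mul_div_comm, div_le_div_iff₀ hZpos (by positivity)] at hray
  nlinarith

lemma lRayleigh.lGamma_update_le (hR : lRayleigh A ν) (hν : ∀ S ⊆ A, 0 ≤ ν S)
    (h0 : 0 < ν ∅) (he : e ∈ A) (hf : f ∈ A.erase e) (hw : ∀ k ∈ A.erase e, 0 < w k)
    {c : ℝ} (hc : w f ≤ c) :
    lGamma A ν e (Function.update w f c) ≤ lGamma A ν e w := by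
  have hsplit : ∀ v : V → ℝ, (∀ k ∈ (A.erase e).erase f, v k = w k) →
      lGamma A ν e v =
        (lZ ((A.erase e).erase f) (ν ∘ insert e) w +
            v f * lZ ((A.erase e).erase f) ((ν ∘ insert e) ∘ insert f) w) /
          (lZ ((A.erase e).erase f) ν w + v f * lZ ((A.erase e).erase f) (ν ∘ insert f) w) :=
    fun v hv => by
      rw [lGamma_eq, lZ_eq_add_mul hf (ν ∘ insert e), lZ_eq_add_mul hf ν]
      simp only [lZ_congr hv]
  rw [hsplit _ fun k hk => Function.update_of_ne (ne_of_mem_erase hk) c w,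
    hsplit w fun _ _ => rfl, Function.update_self]
  set C := (A.erase e).erase f
  have hνe := nonneg_comp_insert hν he
  have hwC : ∀ k ∈ C, 0 ≤ w k := fun k hk => (hw k (mem_of_mem_erase hk)).le
  have hD0 : 0 < lZ C ν w := lZ_pos (nonneg_of_subset_erase (nonneg_of_subset_erase hν)) h0 hwC
  have hD1 : 0 ≤ lZ C (ν ∘ insert f) w :=
    lZ_nonneg (nonneg_comp_insert (nonneg_of_subset_erase hν) hf) hwC
  have hN0 : 0 ≤ lZ C (ν ∘ insert e) w := lZ_nonneg (nonneg_of_subset_erase hνe) hwC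
  have hN1 : 0 ≤ lZ C ((ν ∘ insert e) ∘ insert f) w := lZ_nonneg (nonneg_comp_insert hνe hf) hwC
  have hcross := hR.lZ_insert_mul_le hν h0 he hf fun k hk => hw k (mem_of_mem_erase hk)
  have hc0 : 0 ≤ c := (hw f hf).le.trans hc
  have hwf := (hw f hf).le
  rw [div_le_div_iff₀ (by positivity) (by positivity)]
  nlinarith [mul_le_mul_of_nonneg_left hcross (sub_nonneg.2 hc)]

lemma lRayleigh.lGamma_antitone_of_pos (hR : lRayleigh A ν) (hν : ∀ S ⊆ A, 0 ≤ ν S)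
    (h0 : 0 < ν ∅) (he : e ∈ A) (hw : ∀ k ∈ A.erase e, 0 < w k)
    (hle : ∀ k ∈ A.erase e, w k ≤ w' k) : lGamma A ν e w' ≤ lGamma A ν e w := by
  -- raise the coordinates from `w` to `w'` one at a time
  let v : Finset V → V → ℝ := fun s k => if k ∈ s then w' k else w k
  have hv : lGamma A ν e (v (A.erase e)) ≤ lGamma A ν e w := by
    refine Finset.induction_on' (motive := fun s => lGamma A ν e (v s) ≤ lGamma A ν e w)
      (A.erase e) (by simp [v]) fun a s ha _ has ih => ?_
    have hupd : v (insert a s) = Function.update (v s) a (w' a) := by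
      ext k; by_cases hk : k = a <;> simp [v, hk]
    rw [hupd]
    refine (hR.lGamma_update_le hν h0 he ha (fun k hk => ?_) ?_).trans ih
    · simp only [v]; split_ifs
      exacts [(hw k hk).trans_le (hle k hk), hw k hk]
    · simp only [v, if_neg has]; exact hle a ha
  rwa [lGamma_congr (w' := w') fun k hk => by simp [v, hk]] at hv

lemma lRayleigh.lGamma_antitone (hR : lRayleigh A ν) (hν : ∀ S ⊆ A, 0 ≤ ν S)
    (h0 : 0 < ν ∅) (he : e ∈ A) (hw : ∀ k ∈ A.erase e, 0 ≤ w k)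
    (hle : ∀ k ∈ A.erase e, w k ≤ w' k) : lGamma A ν e w' ≤ lGamma A ν e w := by
  have hshift : ∀ v : V → ℝ, (∀ k ∈ A.erase e, 0 ≤ v k) →
      Tendsto (fun ε => lGamma A ν e fun k => v k + ε) (𝓝[>] 0) (𝓝 (lGamma A ν e v)) :=
    fun v hv => tendsto_lGamma hν h0 hv fun k _ =>
      ((continuous_const_add (v k)).tendsto' 0 _ (add_zero _)).mono_left nhdsWithin_le_nhds
  refine le_of_tendsto_of_tendsto (hshift w' fun k hk => (hw k hk).trans (hle k hk))
    (hshift w hw) ?_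
  filter_upwards [self_mem_nhdsWithin] with ε (hε : 0 < ε)
  exact hR.lGamma_antitone_of_pos hν h0 he (fun k hk => by linarith [hw k hk])
    fun k hk => by linarith [hle k hk]

end Rayleigh

lemma div_le_div_of_div_add_le_div_add {a b c d : ℝ} (hb : 0 < b) (hd : 0 < d) (ha : 0 ≤ a)
    (hc : 0 ≤ c) (h : a / (b + a) ≤ c / (d + c)) : a / b ≤ c / d := by
  rw [div_le_div_iff₀ (by positivity) (by positivity)] at h
  rw [div_le_div_iff₀ hb hd]
  nlinarith

section SizeIncreasing

variable {V : Type*} [DecidableEq V] {A : Finset V} {ν : Finset V → ℝ} {e : V} {w : V → ℝ}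

lemma lEnergyIn_le_card_mul_lProb (hν : ∀ S ⊆ A, 0 ≤ ν S) (hw : ∀ k ∈ A, 0 ≤ w k) :
    lEnergyIn A ν e w ≤ A.card * lProb A ν w (fun S => e ∈ S) := by
  rw [lEnergyIn_eq, lProb_mem_eq, ← mul_div_assoc]
  refine div_le_div_of_nonneg_right ?_ (lZ_nonneg hν hw)
  rw [lZ, lZ, mul_sum]
  refine sum_le_sum fun T hT => ?_
  have hTA := mem_powerset.1 hT
  have hνT : 0 ≤ (if e ∈ T then ν T else 0) * ∏ k ∈ T, w k :=
    mul_nonneg (by split_ifs <;> simp [hν T hTA]) (prod_nonneg fun k hk => hw k (hTA hk))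
  rw [mul_assoc]
  exact mul_le_mul_of_nonneg_right (by exact_mod_cast card_le_card hTA) hνT

lemma lSizeInc.lProb_pos (hSI : lSizeInc A ν) (hν : ∀ S ⊆ A, 0 ≤ ν S) (he : e ∈ A)
    (hw : ∀ k ∈ A, 0 < w k) : 0 < lProb A ν w (fun S => e ∈ S) := by
  have hsi := hSI w hw e he
  have hle := lEnergyIn_le_card_mul_lProb (e := e) hν fun k hk => (hw k hk).le
  by_contra hP
  have hP0 : lProb A ν w (fun S => e ∈ S) = 0 := by
    refine le_antisymm (not_lt.1 hP) ?_
    rw [lProb_mem_eq]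
    exact div_nonneg (lZ_nonneg (fun S hS => by split_ifs <;> simp [hν S hS])
      fun k hk => (hw k hk).le) (lZ_nonneg hν fun k hk => (hw k hk).le)
  rw [hP0] at hsi hle
  linarith

lemma lSizeInc.monotoneOn_lProb_smul (hSI : lSizeInc A ν) (hν : ∀ S ⊆ A, 0 ≤ ν S)
    (h0 : 0 < ν ∅) (he : e ∈ A) (hw : ∀ k ∈ A, 0 < w k) :
    MonotoneOn (fun u => lProb A ν (fun k => u * w k) fun S => e ∈ S) (Set.Ioi 0) := by
  have hZ : ∀ u : ℝ, 0 < u → 0 < lZ A ν fun k => u * w k := fun u hu =>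
    lZ_pos hν h0 fun k hk => (mul_pos hu (hw k hk)).le
  have hderiv : ∀ u : ℝ, 0 < u →
      HasDerivAt (fun u => lProb A ν (fun k => u * w k) fun S => e ∈ S)
        (((lZ A (fun T => T.card * if e ∈ T then ν T else 0) fun k => u * w k) / u *
              (lZ A ν fun k => u * w k) -
            (lZ A (fun T => if e ∈ T then ν T else 0) fun k => u * w k) *
              ((lZ A (fun S => S.card * ν S) fun k => u * w k) / u)) /
          (lZ A ν fun k => u * w k) ^ 2) u := fun u hu => by
    simp only [lProb_mem_eq]
    exact (hasDerivAt_lZ_smul w hu.ne').div (hasDerivAt_lZ_smul w hu.ne') (hZ u hu).ne'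
  refine monotoneOn_of_hasDerivWithinAt_nonneg (convex_Ioi 0)
    (fun u hu => (hderiv u hu).continuousAt.continuousWithinAt)
    (fun u hu => (hderiv u (interior_subset hu)).hasDerivWithinAt) fun u hu => ?_
  rw [interior_Ioi] at hu
  have hZu := hZ u hu
  have hsi := hSI (fun k => u * w k) (fun k hk => mul_pos hu (hw k hk)) e he
  rw [lEnergy_eq, lProb_mem_eq, lEnergyIn_eq, div_mul_div_comm,
    div_lt_div_iff₀ (by positivity) hZu] at hsi
  refine div_nonneg ?_ (sq_nonneg _)
  rw [div_mul_eq_mul_div, mul_div_assoc', ← sub_div]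
  refine div_nonneg ?_ (le_of_lt hu)
  nlinarith

lemma lSizeInc.lGamma_smul_mono_of_pos (hSI : lSizeInc A ν) (hν : ∀ S ⊆ A, 0 ≤ ν S)
    (h0 : 0 < ν ∅) (he : e ∈ A) (hw : ∀ k ∈ A.erase e, 0 < w k) {s t : ℝ} (hs : 0 < s)
    (hst : s ≤ t) :
    s * lGamma A ν e (fun k => s * w k) ≤ t * lGamma A ν e (fun k => t * w k) := by
  -- `u Γ(u w) = P / (1 - P)`, `P` the probability of `e` under `u w` with `w e` replaced by `1`
  have hw' : ∀ k ∈ A, 0 < Function.update w e 1 k := fun k hk => by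
    by_cases hke : k = e
    · simp [hke]
    · simpa [hke] using hw k (mem_erase.2 ⟨hke, hk⟩)
  have hprob : ∀ u : ℝ, lProb A ν (fun k => u * Function.update w e 1 k) (fun S => e ∈ S) =
      u * lZ (A.erase e) (ν ∘ insert e) (fun k => u * w k) /
        (lZ (A.erase e) ν (fun k => u * w k) +
          u * lZ (A.erase e) (ν ∘ insert e) (fun k => u * w k)) := by
    intro u
    have hoff : ∀ k ∈ A.erase e, u * Function.update w e 1 k = u * w k := fun k hk => by
      rw [Function.update_of_ne (ne_of_mem_erase hk)]
    rw [lProb_mem he, lZ_eq_add_mul he ν]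
    simp only [Function.update_self, mul_one, lZ_congr hoff]
  have hmono := hSI.monotoneOn_lProb_smul hν h0 he hw' hs (hs.trans_le hst) hst
  simp only [hprob] at hmono
  have ht : 0 < t := hs.trans_le hst
  have hwn : ∀ u : ℝ, 0 < u → ∀ k ∈ A.erase e, 0 ≤ u * w k := fun u hu k hk =>
    (mul_pos hu (hw k hk)).le
  rw [lGamma_eq, lGamma_eq, ← mul_div_assoc, ← mul_div_assoc]
  exact div_le_div_of_div_add_le_div_add
    (lZ_pos (nonneg_of_subset_erase hν) h0 (hwn s hs))
    (lZ_pos (nonneg_of_subset_erase hν) h0 (hwn t ht))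
    (mul_nonneg hs.le (lZ_nonneg (nonneg_comp_insert hν he) (hwn s hs)))
    (mul_nonneg ht.le (lZ_nonneg (nonneg_comp_insert hν he) (hwn t ht))) hmono

lemma lSizeInc.lGamma_smul_mono (hSI : lSizeInc A ν) (hν : ∀ S ⊆ A, 0 ≤ ν S)
    (h0 : 0 < ν ∅) (he : e ∈ A) (hw : ∀ k ∈ A.erase e, 0 ≤ w k) {s t : ℝ} (hs : 0 < s)
    (hst : s ≤ t) :
    s * lGamma A ν e (fun k => s * w k) ≤ t * lGamma A ν e (fun k => t * w k) := by
  have hshift : ∀ u : ℝ, 0 < u → Tendsto (fun ε => u * lGamma A ν e fun k => u * (w k + ε))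
      (𝓝[>] 0) (𝓝 (u * lGamma A ν e fun k => u * w k)) := fun u hu =>
    (tendsto_lGamma hν h0 (fun k hk => mul_nonneg hu.le (hw k hk)) fun k _ =>
      ((continuous_const.mul (continuous_const_add (w k))).tendsto' 0 _ (by simp)).mono_left
        nhdsWithin_le_nhds).const_mul u
  refine le_of_tendsto_of_tendsto (hshift s hs) (hshift t (hs.trans_le hst)) ?_
  filter_upwards [self_mem_nhdsWithin] with ε (hε : 0 < ε)
  exact hSI.lGamma_smul_mono_of_pos hν h0 he (fun k hk => by linarith [hw k hk]) hs hst

end SizeIncreasing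

section CavityMonotone

variable {V : Type*} [DecidableEq V] {A : Finset V} {ν : Finset V → ℝ} {e : V} {w : V → ℝ}

lemma lCavityMonotone.nonneg (h : lCavityMonotone A ν) : ∀ S ⊆ A, 0 ≤ ν S :=
  fun S hS => h.1 S (mem_powerset.2 hS)

lemma lCavityMonotone.lGamma_pos (h : lCavityMonotone A ν) (he : e ∈ A)
    (hw : ∀ k ∈ A.erase e, 0 ≤ w k) : 0 < lGamma A ν e w := by
  have hν := h.nonneg
  obtain ⟨-, h0, hR, hSI⟩ := h
  -- `Γ(w) ≥ Γ(w + 1)`, and the latter is positive because `e` has positive probability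
  have hw1 : ∀ k ∈ A, 0 < Function.update (fun k => w k + 1) e 1 k := fun k hk => by
    by_cases hke : k = e
    · simp [hke]
    · simpa [hke] using (hw k (mem_erase.2 ⟨hke, hk⟩)).trans_lt (lt_add_one _)
  have hP := hSI.lProb_pos hν he hw1
  rw [lProb_mem he, Function.update_self, one_mul,
    div_pos_iff_of_pos_right (lZ_pos hν h0 fun k hk => (hw1 k hk).le),
    lZ_congr fun k hk => Function.update_of_ne (ne_of_mem_erase hk) _ _] at hP
  refine lt_of_lt_of_le ?_ (hR.lGamma_antitone hν h0 he hw fun k _ => (lt_add_one (w k)).le)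
  exact div_pos hP (lZ_pos (nonneg_of_subset_erase hν) h0 fun k hk => by linarith [hw k hk])

end CavityMonotone

section CavityOperator

variable {V : Type*} [DecidableEq V] {G : SimpleGraph V} [G.LocallyFinite]
  {μ : V → Finset V → ℝ} {i j : V} {x y : V → V → ℝ}

lemma adj_of_mem_erase_neighborFinset {k : V} (hk : k ∈ (G.neighborFinset i).erase j) :
    G.Adj k i :=
  ((G.mem_neighborFinset i k).1 (mem_of_mem_erase hk)).symm

lemma cavOp_congr (h : ∀ k l, G.Adj k l → x k l = y k l) :
    cavOp G μ x i j = cavOp G μ y i j :=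
  lGamma_congr fun k hk => h k i (adj_of_mem_erase_neighborFinset hk)

lemma cavOp_pos (hcm : lCavityMonotone (G.neighborFinset i) (μ i)) (hij : G.Adj i j)
    (hx : ∀ k l, G.Adj k l → 0 ≤ x k l) :
    0 < cavOp G μ x i j :=
  hcm.lGamma_pos ((G.mem_neighborFinset i j).2 hij) fun k hk =>
    hx k i (adj_of_mem_erase_neighborFinset hk)

lemma cavOp_antitone (hcm : lCavityMonotone (G.neighborFinset i) (μ i)) (hij : G.Adj i j)
    (hx : ∀ k l, G.Adj k l → 0 ≤ x k l) (hxy : ∀ k l, G.Adj k l → x k l ≤ y k l) :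
    cavOp G μ y i j ≤ cavOp G μ x i j := by
  have ⟨_, h0, hR, _⟩ := hcm
  exact hR.lGamma_antitone hcm.nonneg h0 ((G.mem_neighborFinset i j).2 hij)
    (fun k hk => hx k i (adj_of_mem_erase_neighborFinset hk))
    fun k hk => hxy k i (adj_of_mem_erase_neighborFinset hk)

lemma cavOp_smul_mono (hcm : lCavityMonotone (G.neighborFinset i) (μ i)) (hij : G.Adj i j)
    (hx : ∀ k l, G.Adj k l → 0 ≤ x k l) {s t : ℝ} (hs : 0 < s) (hst : s ≤ t) :
    s * cavOp G μ (fun k l => s * x k l) i j ≤ t * cavOp G μ (fun k l => t * x k l) i j := by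
  have ⟨_, h0, _, hSI⟩ := hcm
  exact hSI.lGamma_smul_mono hcm.nonneg h0 ((G.mem_neighborFinset i j).2 hij)
    (fun k hk => hx k i (adj_of_mem_erase_neighborFinset hk)) hs hst

lemma tendsto_cavOp (hcm : lCavityMonotone (G.neighborFinset i) (μ i)) {ι : Type*}
    {F : Filter ι} {xn : ι → V → V → ℝ} (hx : ∀ k l, G.Adj k l → 0 ≤ x k l)
    (h : ∀ k l, G.Adj k l → Tendsto (fun n => xn n k l) F (𝓝 (x k l))) :
    Tendsto (fun n => cavOp G μ (xn n) i j) F (𝓝 (cavOp G μ x i j)) := by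
  have ⟨_, h0, _, _⟩ := hcm
  exact tendsto_lGamma hcm.nonneg h0 (fun k hk => hx k i (adj_of_mem_erase_neighborFinset hk))
    fun k hk => h k i (adj_of_mem_erase_neighborFinset hk)

lemma cavOpExt_nonneg (hcm : lCavityMonotone (G.neighborFinset i) (μ i)) (hij : G.Adj i j)
    (y : V → V → ℝ≥0∞) : 0 ≤ cavOpExt G μ y i j :=
  Real.iInf_nonneg fun _ => (cavOp_pos hcm hij fun _ _ _ => ENNReal.toReal_nonneg).le

lemma cavOpExt_le [Fintype V] (hcm : lCavityMonotone (G.neighborFinset i) (μ i))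
    (hij : G.Adj i j) {y : V → V → ℝ≥0∞} (hx : ∀ k l, G.Adj k l → 0 ≤ x k l)
    (hxy : ∀ k l, G.Adj k l → ENNReal.ofReal (x k l) ≤ y k l) :
    cavOpExt G μ y i j ≤ cavOp G μ x i j := by
  obtain ⟨C, hC⟩ := Finite.exists_le fun p : V × V => x p.1 p.2
  obtain ⟨M, hM⟩ := exists_nat_ge C
  refine ciInf_le_of_le ⟨0, ?_⟩ M (cavOp_antitone hcm hij hx fun k l hkl => ?_)
  · rintro _ ⟨M, rfl⟩
    exact (cavOp_pos hcm hij fun _ _ _ => ENNReal.toReal_nonneg).le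
  · rw [← ENNReal.ofReal_le_iff_le_toReal
      ((min_le_right _ _).trans_lt (ENNReal.natCast_lt_top M)).ne]
    exact le_min (hxy k l hkl)
      ((ENNReal.ofReal_le_ofReal ((hC (k, l)).trans hM)).trans_eq (ENNReal.ofReal_natCast M))

lemma tendsto_cavOp_cavOpExt [Fintype V] (hcm : lCavityMonotone (G.neighborFinset i) (μ i))
    (hij : G.Adj i j) {ι : Type*} [Preorder ι] [IsDirectedOrder ι] [Nonempty ι]
    {v : ι → V → V → ℝ} {y : V → V → ℝ≥0∞} (hv : ∀ n k l, G.Adj k l → 0 ≤ v n k l)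
    (hmono : ∀ k l, G.Adj k l → Monotone fun n => v n k l)
    (hy : ∀ k l, G.Adj k l → Tendsto (fun n => ENNReal.ofReal (v n k l)) atTop (𝓝 (y k l))) :
    Tendsto (fun n => cavOp G μ (v n) i j) atTop (𝓝 (cavOpExt G μ y i j)) := by
  have hanti : Antitone fun n => cavOp G μ (v n) i j := fun a b hab =>
    cavOp_antitone hcm hij (hv a) fun k l hkl => hmono k l hkl hab
  have hbdd : BddBelow (Set.range fun n => cavOp G μ (v n) i j) := by
    refine ⟨0, ?_⟩
    rintro _ ⟨n, rfl⟩
    exact (cavOp_pos hcm hij (hv n)).le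
  convert tendsto_atTop_ciInf hanti hbdd using 2
  refine le_antisymm (le_ciInf fun n => cavOpExt_le hcm hij (hv n) fun k l hkl => ?_)
    (le_ciInf fun M => ?_)
  · exact (ENNReal.ofReal_mono.comp (hmono k l hkl)).ge_of_tendsto (hy k l hkl) n
  -- `Γ(v n) ≤ Γ(min (v n) M) → Γ(min y M)`
  have htrunc : ∀ k l, G.Adj k l → Tendsto (fun n => min (v n k l) (M : ℝ)) atTop
      (𝓝 (y k l ⊓ (M : ℝ≥0∞)).toReal) := fun k l hkl => by
    have hM : ∀ n, min (v n k l) (M : ℝ) = (ENNReal.ofReal (v n k l) ⊓ (M : ℝ≥0∞)).toReal :=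
      fun n => by
        rw [← ENNReal.ofReal_natCast, ← ENNReal.ofReal_min,
          ENNReal.toReal_ofReal (le_min (hv n k l hkl) M.cast_nonneg)]
    simp only [hM]
    exact (ENNReal.tendsto_toReal ((min_le_right _ _).trans_lt (ENNReal.natCast_lt_top M)).ne).comp
      ((hy k l hkl).min tendsto_const_nhds)
  refine le_of_tendsto_of_tendsto' (tendsto_atTop_ciInf hanti hbdd)
    (tendsto_cavOp hcm (fun _ _ _ => ENNReal.toReal_nonneg) htrunc) fun n => ?_
  exact cavOp_antitone hcm hij (fun k l hkl => le_min (hv n k l hkl) M.cast_nonneg)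
    fun _ _ _ => min_le_left _ _

lemma ofReal_le_cavOpBar (hcm : ∀ i, lCavityMonotone (G.neighborFinset i) (μ i))
    (hij : G.Adj i j) {t : ℝ} (ht : 1 ≤ t) {y z : V → V → ℝ}
    (hy : ∀ k l, G.Adj k l → y k l = t * cavOp G μ y k l) (hz : ∀ k l, G.Adj k l → 0 ≤ z k l)
    (hzy : ∀ k l, G.Adj k l → z k l ≤ cavOp G μ y k l) :
    ENNReal.ofReal (y i j) ≤ cavOpBar G μ z i j := by
  have ht0 : 0 ≤ t := zero_le_one.trans ht
  refine le_iSup₂_of_le t ht (ENNReal.ofReal_le_ofReal ?_)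
  rw [hy i j hij]
  refine mul_le_mul_of_nonneg_left (cavOp_antitone (hcm i) hij
    (fun k l hkl => mul_nonneg ht0 (hz k l hkl)) fun k l hkl => ?_) ht0
  rw [hy k l hkl]
  exact mul_le_mul_of_nonneg_left (hzy k l hkl) ht0

end CavityOperator

section CavityLimit

variable {V : Type*} {i j : V}

noncomputable def cavLimit (x : ℝ → V → V → ℝ) : V → V → ℝ≥0∞ :=
  fun i j => ⨆ t : Set.Ioi (0 : ℝ), ENNReal.ofReal (x t i j)

lemma ofReal_le_cavLimit (x : ℝ → V → V → ℝ) {s : ℝ} (hs : 0 < s) :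
    ENNReal.ofReal (x s i j) ≤ cavLimit x i j :=
  le_iSup (fun t : Set.Ioi (0 : ℝ) => ENNReal.ofReal (x t i j)) ⟨s, hs⟩

lemma tendsto_cavLimit {x : ℝ → V → V → ℝ} (hx : MonotoneOn (fun t => x t i j) (Set.Ioi 0)) :
    Tendsto (fun t => ENNReal.ofReal (x t i j)) atTop (𝓝 (cavLimit x i j)) :=
  tendsto_comp_val_Ioi_atTop.1 <| tendsto_atTop_iSup fun a b hab =>
    ENNReal.ofReal_le_ofReal (hx a.2 b.2 hab)

end CavityLimit

section CavitySolutions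

variable {V : Type*} [DecidableEq V] {G : SimpleGraph V} [G.LocallyFinite]
  {μ : V → Finset V → ℝ} {i j : V}

lemma cavStep_mapsTo (hcm : ∀ i, lCavityMonotone (G.neighborFinset i) (μ i)) {s t : ℝ}
    (hs : 0 < s) (hst : s ≤ t) {y : V → V → ℝ} (hy0 : ∀ k l, G.Adj k l → 0 ≤ y k l)
    (hy : ∀ k l, G.Adj k l → y k l = s * cavOp G μ y k l) :
    Set.MapsTo (cavStep G μ t) {v | ∀ k l, G.Adj k l → y k l ≤ v k l ∧ v k l ≤ t / s * y k l}
      {v | ∀ k l, G.Adj k l → y k l ≤ v k l ∧ v k l ≤ t / s * y k l} := by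
  intro v hv k l hkl
  have ht : 0 < t := hs.trans_le hst
  have hv0 : ∀ a b, G.Adj a b → 0 ≤ v a b := fun a b hab => (hy0 a b hab).trans (hv a b hab).1
  constructor
  · have hys : y = fun a b => s * (y a b / s) := by ext; field_simp
    calc y k l = s * cavOp G μ (fun a b => s * (y a b / s)) k l := by rw [← hys, ← hy k l hkl]
      _ ≤ t * cavOp G μ (fun a b => t * (y a b / s)) k l :=
        cavOp_smul_mono (hcm k) hkl (fun a b hab => div_nonneg (hy0 a b hab) hs.le) hs hst
      _ ≤ t * cavOp G μ v k l := by
        refine mul_le_mul_of_nonneg_left (cavOp_antitone (hcm k) hkl hv0 fun a b hab => ?_) ht.le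
        exact (hv a b hab).2.trans_eq (by ring)
  · calc cavStep G μ t v k l ≤ t * cavOp G μ y k l :=
        mul_le_mul_of_nonneg_left (cavOp_antitone (hcm k) hkl hy0 fun a b hab => (hv a b hab).1)
          ht.le
      _ = t / s * y k l := by rw [hy k l hkl]; field_simp

lemma le_of_tendsto_iterate_cavStep (hcm : ∀ i, lCavityMonotone (G.neighborFinset i) (μ i))
    (hij : G.Adj i j) {s t : ℝ} (hs : 0 < s) (hst : s ≤ t) {y z : V → V → ℝ}
    (hy0 : ∀ k l, G.Adj k l → 0 ≤ y k l) (hy : ∀ k l, G.Adj k l → y k l = s * cavOp G μ y k l)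
    (hz : Tendsto (fun n => (cavStep G μ t)^[n] y i j) atTop (𝓝 (z i j))) : y i j ≤ z i j := by
  have hstart : y ∈ {v | ∀ k l, G.Adj k l → y k l ≤ v k l ∧ v k l ≤ t / s * y k l} :=
    fun k l hkl => ⟨le_rfl, le_mul_of_one_le_left (hy0 k l hkl) ((one_le_div hs).2 hst)⟩
  exact ge_of_tendsto' hz fun n =>
    ((cavStep_mapsTo hcm hs hst hy0 hy).iterate n hstart i j hij).1

lemma cavStep_twice_mapsTo [Fintype V] (hcm : ∀ i, lCavityMonotone (G.neighborFinset i) (μ i))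
    {t : ℝ} (ht : 1 ≤ t) {y : V → V → ℝ≥0∞}
    (hy : ∀ k l, G.Adj k l → y k l = cavOpBar G μ (cavOpExt G μ y) k l) :
    Set.MapsTo (cavStep G μ t)^[2]
      {v | ∀ k l, G.Adj k l → 0 ≤ v k l ∧ ENNReal.ofReal (v k l) ≤ y k l}
      {v | ∀ k l, G.Adj k l → 0 ≤ v k l ∧ ENNReal.ofReal (v k l) ≤ y k l} := by
  intro v hv k l hkl
  have ht0 : 0 < t := one_pos.trans_le ht
  set z := cavOpExt G μ y
  set w := cavStep G μ t v
  have hw0 : ∀ a b, G.Adj a b → 0 ≤ w a b := fun a b hab =>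
    mul_nonneg ht0.le (cavOp_pos (hcm a) hab fun c d hcd => (hv c d hcd).1).le
  have hzw : ∀ a b, G.Adj a b → t * z a b ≤ w a b := fun a b hab =>
    mul_le_mul_of_nonneg_left (cavOpExt_le (hcm a) hab (fun c d hcd => (hv c d hcd).1)
      fun c d hcd => (hv c d hcd).2) ht0.le
  refine ⟨mul_nonneg ht0.le (cavOp_pos (hcm k) hkl hw0).le, ?_⟩
  calc ENNReal.ofReal (cavStep G μ t w k l)
      ≤ ENNReal.ofReal (t * cavOp G μ (fun a b => t * z a b) k l) :=
        ENNReal.ofReal_le_ofReal (mul_le_mul_of_nonneg_left (cavOp_antitone (hcm k) hkl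
          (fun a b hab => mul_nonneg ht0.le (cavOpExt_nonneg (hcm a) hab y)) hzw) ht0.le)
    _ ≤ cavOpBar G μ z k l := le_iSup₂_of_le t ht le_rfl
    _ = y k l := (hy k l hkl).symm

lemma ofReal_le_of_eq_cavOpBar [Fintype V]
    (hcm : ∀ i, lCavityMonotone (G.neighborFinset i) (μ i)) (hij : G.Adj i j) {t : ℝ}
    (ht : 1 ≤ t) {y : V → V → ℝ≥0∞}
    (hy : ∀ k l, G.Adj k l → y k l = cavOpBar G μ (cavOpExt G μ y) k l) {z : V → V → ℝ}
    (hz : Tendsto (fun n => (cavStep G μ t)^[n] 0 i j) atTop (𝓝 (z i j))) :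
    ENNReal.ofReal (z i j) ≤ y i j := by
  have hstart : (0 : V → V → ℝ) ∈
      {v | ∀ k l, G.Adj k l → 0 ≤ v k l ∧ ENNReal.ofReal (v k l) ≤ y k l} :=
    fun _ _ _ => by simp
  have heven := hz.comp (tendsto_id.const_mul_atTop' two_pos)
  refine le_of_tendsto' ((ENNReal.continuous_ofReal.tendsto _).comp heven) fun n => ?_
  have := (cavStep_twice_mapsTo hcm ht hy).iterate n hstart i j hij
  simp only [Function.comp_apply, id, Function.iterate_mul]
  exact this.2

variable {x : ℝ → V → V → ℝ}

lemma cavLimit_pos (hcm : ∀ i, lCavityMonotone (G.neighborFinset i) (μ i)) (hij : G.Adj i j)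
    {s : ℝ} (hs : 0 < s) (hxnn : ∀ k l, G.Adj k l → 0 ≤ x s k l)
    (hxfix : x s i j = s * cavOp G μ (x s) i j) : 0 < cavLimit x i j := by
  have hxs : 0 < x s i j := hxfix ▸ mul_pos hs (cavOp_pos (hcm i) hij hxnn)
  exact (ENNReal.ofReal_pos.2 hxs).trans_le (ofReal_le_cavLimit x hs)

variable [Fintype V]

lemma cavLimit_le_cavOpBar (hcm : ∀ i, lCavityMonotone (G.neighborFinset i) (μ i))
    (hij : G.Adj i j) (hxnn : ∀ t : ℝ, 0 < t → ∀ k l, G.Adj k l → 0 ≤ x t k l)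
    (hxfix : ∀ t : ℝ, 0 < t → ∀ i j, G.Adj i j → x t i j = t * cavOp G μ (x t) i j)
    (hmono : ∀ i j, G.Adj i j → MonotoneOn (fun t : ℝ => x t i j) (Set.Ioi 0)) :
    cavLimit x i j ≤ cavOpBar G μ (cavOpExt G μ (cavLimit x)) i j := by
  refine iSup_le fun t => ?_
  have ht1 : (0 : ℝ) < max (t : ℝ) 1 := one_pos.trans_le (le_max_right _ _)
  refine (ENNReal.ofReal_le_ofReal (hmono i j hij t.2 ht1 (le_max_left _ _))).trans ?_
  exact ofReal_le_cavOpBar hcm hij (le_max_right _ _) (hxfix _ ht1)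
    (fun k l hkl => cavOpExt_nonneg (hcm k) hkl _) fun k l hkl =>
      cavOpExt_le (hcm k) hkl (hxnn _ ht1) fun a b _ => ofReal_le_cavLimit x ht1

lemma cavOpBar_le_cavLimit (hcm : ∀ i, lCavityMonotone (G.neighborFinset i) (μ i))
    (hij : G.Adj i j) (hxnn : ∀ t : ℝ, 0 < t → ∀ k l, G.Adj k l → 0 ≤ x t k l)
    (hxfix : ∀ t : ℝ, 0 < t → ∀ i j, G.Adj i j → x t i j = t * cavOp G μ (x t) i j)
    (hmono : ∀ i j, G.Adj i j → MonotoneOn (fun t : ℝ => x t i j) (Set.Ioi 0)) :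
    cavOpBar G μ (cavOpExt G μ (cavLimit x)) i j ≤ cavLimit x i j := by
  set z := cavOpExt G μ (cavLimit x)
  have hfield : ∀ k l, G.Adj k l →
      Tendsto (fun s : Set.Ioi (0 : ℝ) => cavOp G μ (x s) k l) atTop (𝓝 (z k l)) :=
    fun k l hkl => tendsto_cavOp_cavOpExt (hcm k) hkl (fun s => hxnn s s.2)
      (fun a b hab _ _ hpq => hmono a b hab (Subtype.prop _) (Subtype.prop _) hpq)
      fun a b hab => tendsto_atTop_iSup fun p q hpq =>
        ENNReal.ofReal_le_ofReal (hmono a b hab p.2 q.2 hpq)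
  refine iSup₂_le fun t ht => ?_
  have ht0 : 0 < t := one_pos.trans_le ht
  refine le_of_tendsto ((ENNReal.continuous_ofReal.tendsto _).comp ((tendsto_cavOp (hcm i)
    (fun k l hkl => mul_nonneg ht0.le (cavOpExt_nonneg (hcm k) hkl _))
    fun k l hkl => (hfield k l hkl).const_mul t).const_mul t)) ?_
  filter_upwards [eventually_ge_atTop (⟨t, ht0⟩ : Set.Ioi (0 : ℝ))] with s (hs : t ≤ s)
  calc ENNReal.ofReal (t * cavOp G μ (fun k l => t * cavOp G μ (x s) k l) i j)
      ≤ ENNReal.ofReal (s * cavOp G μ (fun k l => s * cavOp G μ (x s) k l) i j) :=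
        ENNReal.ofReal_le_ofReal (cavOp_smul_mono (hcm i) hij
          (fun k l hkl => (cavOp_pos (hcm k) hkl (hxnn s s.2)).le) ht0 hs)
    _ = ENNReal.ofReal (x s i j) := by
        rw [cavOp_congr fun k l hkl => (hxfix s s.2 k l hkl).symm, ← hxfix s s.2 i j hij]
    _ ≤ cavLimit x i j := ofReal_le_cavLimit x s.2

lemma cavLimit_le_of_eq_cavOpBar (hcm : ∀ i, lCavityMonotone (G.neighborFinset i) (μ i))
    (hij : G.Adj i j) (hmono : MonotoneOn (fun t : ℝ => x t i j) (Set.Ioi 0))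
    (hattr : ∀ t : ℝ, 0 < t →
      Tendsto (fun n => (cavStep G μ t)^[n] 0 i j) atTop (𝓝 (x t i j)))
    {y : V → V → ℝ≥0∞} (hy : ∀ k l, G.Adj k l → y k l = cavOpBar G μ (cavOpExt G μ y) k l) :
    cavLimit x i j ≤ y i j := by
  refine iSup_le fun t => ?_
  have ht1 : (0 : ℝ) < max (t : ℝ) 1 := one_pos.trans_le (le_max_right _ _)
  exact (ENNReal.ofReal_le_ofReal (hmono t.2 ht1 (le_max_left _ _))).trans
    (ofReal_le_of_eq_cavOpBar hcm hij (le_max_right _ _) hy (hattr _ ht1))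

end CavitySolutions

theorem stmt16_general {V : Type*} [Fintype V] [DecidableEq V] (G : SimpleGraph V)
    [DecidableRel G.Adj] (μ : V → Finset V → ℝ)
    (hcm : ∀ i : V, lCavityMonotone (G.neighborFinset i) (μ i))
    (x : ℝ → V → V → ℝ)
    (hxnn : ∀ t : ℝ, 0 < t → ∀ i j, 0 ≤ x t i j)
    (hxfix : ∀ t : ℝ, 0 < t → ∀ i j, G.Adj i j → x t i j = t * cavOp G μ (x t) i j)
    (hattr : ∀ t : ℝ, 0 < t → ∀ x0 : V → V → ℝ, (∀ i j, 0 ≤ x0 i j) →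
      ∀ i j, G.Adj i j →
        Tendsto (fun k : ℕ => (cavStep G μ t)^[k] x0 i j) atTop (nhds (x t i j))) :
    ∃ xbar : V → V → ℝ≥0∞,
      (∀ i j, G.Adj i j → MonotoneOn (fun t : ℝ => x t i j) (Set.Ioi 0)) ∧
      (∀ i j, G.Adj i j →
        Tendsto (fun t : ℝ => ENNReal.ofReal (x t i j)) atTop (nhds (xbar i j))) ∧
      (∀ i j, G.Adj i j → 0 < xbar i j) ∧
      (∀ i j, G.Adj i j → xbar i j = cavOpBar G μ (cavOpExt G μ xbar) i j) ∧
      (∀ y : V → V → ℝ≥0∞, (∀ i j, G.Adj i j → 0 < y i j) →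
        (∀ i j, G.Adj i j → y i j = cavOpBar G μ (cavOpExt G μ y) i j) →
        ∀ i j, G.Adj i j → xbar i j ≤ y i j) := by
  have hxnn' : ∀ t : ℝ, 0 < t → ∀ k l, G.Adj k l → 0 ≤ x t k l :=
    fun t ht k l _ => hxnn t ht k l
  have hmono : ∀ i j, G.Adj i j → MonotoneOn (fun t : ℝ => x t i j) (Set.Ioi 0) :=
    fun i j hij s hs t ht hst => le_of_tendsto_iterate_cavStep hcm hij hs hst (hxnn' s hs)
      (hxfix s hs) (hattr t ht (x s) (hxnn s hs) i j hij)
  exact ⟨cavLimit x, hmono, fun i j hij => tendsto_cavLimit (hmono i j hij),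
    fun i j hij => cavLimit_pos hcm hij one_pos (hxnn' 1 one_pos) (hxfix 1 one_pos i j hij),
    fun i j hij => le_antisymm (cavLimit_le_cavOpBar hcm hij hxnn' hxfix hmono)
      (cavOpBar_le_cavLimit hcm hij hxnn' hxfix hmono),
    fun y _ hy i j hij => cavLimit_le_of_eq_cavOpBar hcm hij (hmono i j hij)
      (fun t ht => hattr t ht 0 (fun _ _ => le_rfl) i j hij) hy⟩

/-- on a finite cavity-monotone network, the solutions `x(t)` of the cavity
equations increase, as `t → ∞`, to a limit `x̄ ∈ (0,∞]^{Ē}` which is the smallest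
solution of the cavity equation at infinite activity `x̄ = (Γ̄_G ∘ Γ_G)(x̄)`. -/
theorem stmt16 {V : Type*} [Fintype V] [DecidableEq V] (G : SimpleGraph V)
    [DecidableRel G.Adj] (μ : V → Finset V → ℝ)
    (hcm : ∀ i : V, lCavityMonotone (G.neighborFinset i) (μ i))
    (x : ℝ → V → V → ℝ)
    (hxnn : ∀ t : ℝ, 0 < t → ∀ i j, 0 ≤ x t i j)
    (hxfix : ∀ t : ℝ, 0 < t → ∀ i j, G.Adj i j → x t i j = t * cavOp G μ (x t) i j)
    (hxuniq : ∀ t : ℝ, 0 < t → ∀ y : V → V → ℝ, (∀ i j, 0 ≤ y i j) →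
      (∀ i j, G.Adj i j → y i j = t * cavOp G μ y i j) →
      ∀ i j, G.Adj i j → y i j = x t i j)
    (hattr : ∀ t : ℝ, 0 < t → ∀ x0 : V → V → ℝ, (∀ i j, 0 ≤ x0 i j) →
      ∀ i j, G.Adj i j →
        Tendsto (fun k : ℕ => (cavStep G μ t)^[k] x0 i j) atTop (nhds (x t i j))) :
    ∃ xbar : V → V → ℝ≥0∞,
      (∀ i j, G.Adj i j → MonotoneOn (fun t : ℝ => x t i j) (Set.Ioi 0)) ∧
      (∀ i j, G.Adj i j →
        Tendsto (fun t : ℝ => ENNReal.ofReal (x t i j)) atTop (nhds (xbar i j))) ∧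
      (∀ i j, G.Adj i j → 0 < xbar i j) ∧
      (∀ i j, G.Adj i j → xbar i j = cavOpBar G μ (cavOpExt G μ xbar) i j) ∧
      (∀ y : V → V → ℝ≥0∞, (∀ i j, G.Adj i j → 0 < y i j) →
        (∀ i j, G.Adj i j → y i j = cavOpBar G μ (cavOpExt G μ y) i j) →
        ∀ i j, G.Adj i j → xbar i j ≤ y i j) :=
  stmt16_general G μ hcm x hxnn hxfix hattr

end InfiniteActivity
end
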